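/- Let X be a measurable space, Θ a measurable space, and ρ : Θ × Θ → ℝ a nonnegative, symmetric, jointly measurable loss function. Let d ≥ 1, let E_d = {−1,1}^d, and let (P_e)_{e∈E_d} be probability measures on X and (θ_e)_{e∈E_d} elements of Θ. Suppose there exist τ ∈ ℝ and α > 0 such that (i) for all u, v ∈ E_d, ρ(θ_u, θ_v) ≥ 2τ·#{i : uᵢ ≠ vᵢ}, and (ii) for all u, v ∈ E_d and all t ∈ Θ, ρ(θ_u, θ_v) ≤ α·( ρ(θ_u, t) + ρ(θ_v, t) ). For i ∈ {1,…,d} define the mixtures P_{+i} = 2^{1−d}·Σ_{e∈E_d : eᵢ=1} P_e and P_{−i} = 2^{1−d}·Σ_{e∈E_d : eᵢ=−1} P_e. Then for every measurable estimator θ̂ : X → Θ, max_{e∈E_d} E_{X∼P_e}[ ρ(θ̂(X), θ_e) ] ≥ (τ/(2α))·Σ_{i=1}^d ( 1 − TV(P_{+i}, P_{−i}) ). -/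

import Mathlib

/-!
Replace the estimator by a nearest vertex `ê(x)` of the cube, chosen measurably. Separation and the
quasi-triangle inequality give `ρ(θ̂, θ_e) ≥ (τ/α) · dist_H(ê, e)`, so the risk at `e` is at least
`(τ/α) Σᵢ P_e(êᵢ ≠ eᵢ)`. Averaging over the `2^d` vertices, the `i`-th terms regroup into
`2^{d-1} (P_{+i}(êᵢ = −1) + P_{−i}(êᵢ = +1)) ≥ 2^{d-1} (1 − TV(P_{+i}, P_{−i}))`, and the maximal
risk dominates the average.
-/

open MeasureTheory

/-- Total variation distance between two measures:
`TV(P,Q) = sup_{S measurable} |P(S) − Q(S)|`. -/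
noncomputable def tvDist {X : Type*} [MeasurableSpace X] (P Q : Measure X) : ℝ :=
  ⨆ S : {S : Set X // MeasurableSet S}, |(P S.1).toReal - (Q S.1).toReal|

/-- The Assouad mixture `P_{+i}` (for `b = true`) resp. `P_{−i}` (for `b = false`):
`2^{1−d} Σ_{e : e_i = b} P_e`. -/
noncomputable def assouadMix {X : Type*} [MeasurableSpace X] {d : ℕ}
    (P : (Fin d → Bool) → Measure X) (i : Fin d) (b : Bool) : Measure X :=
  ((2:ENNReal)^(d-1))⁻¹ • ∑ e ∈ Finset.univ.filter (fun e : Fin d → Bool => e i = b), P e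

open Finset ENNReal

section TotalVariation

variable {X : Type*} [MeasurableSpace X] {μ ν : Measure X} [IsProbabilityMeasure μ]
  [IsProbabilityMeasure ν]

lemma abs_measureReal_sub_le_one (s : Set X) : |μ.real s - ν.real s| ≤ 1 :=
  abs_sub_le_of_nonneg_of_le measureReal_nonneg measureReal_le_one measureReal_nonneg
    measureReal_le_one

lemma tvDist_le_one : tvDist μ ν ≤ 1 :=
  ciSup_le fun S => abs_measureReal_sub_le_one S.1

lemma abs_measureReal_sub_le_tvDist {s : Set X} (hs : MeasurableSet s) :
    |μ.real s - ν.real s| ≤ tvDist μ ν :=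
  le_ciSup (f := fun S : {S : Set X // MeasurableSet S} => |μ.real S.1 - ν.real S.1|)
    ⟨1, Set.forall_mem_range.2 fun S => abs_measureReal_sub_le_one S.1⟩ ⟨s, hs⟩

lemma ofReal_one_sub_tvDist_le {s : Set X} (hs : MeasurableSet s) :
    ENNReal.ofReal (1 - tvDist μ ν) ≤ μ sᶜ + ν s := by
  have hreal : 1 - tvDist μ ν ≤ μ.real sᶜ + ν.real s := by
    rw [measureReal_compl hs, probReal_univ]
    linarith [le_abs_self (μ.real s - ν.real s),
      abs_measureReal_sub_le_tvDist (μ := μ) (ν := ν) hs]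
  calc ENNReal.ofReal (1 - tvDist μ ν) ≤ ENNReal.ofReal (μ.real sᶜ + ν.real s) :=
        ENNReal.ofReal_le_ofReal hreal
    _ = μ sᶜ + ν s := by
        rw [ENNReal.ofReal_add measureReal_nonneg measureReal_nonneg, ofReal_measureReal,
          ofReal_measureReal]

end TotalVariation

lemma exists_measurable_argmin {X E β : Type*} [MeasurableSpace X] [MeasurableSpace E]
    [Finite E] [Nonempty E] [LinearOrder β] [TopologicalSpace β] [OrderClosedTopology β]
    [SecondCountableTopology β] [MeasurableSpace β] [OpensMeasurableSpace β]
    (f : E → X → β) (hf : ∀ e, Measurable (f e)) :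
    ∃ sel : X → E, Measurable sel ∧ ∀ x e, f (sel x) x ≤ f e x := by
  classical
  obtain ⟨g, hg⟩ := exists_surjective_nat E
  have hmin : ∀ x, ∃ n, ∀ e, f (g n) x ≤ f e x := fun x => by
    obtain ⟨e₀, he₀⟩ := Finite.exists_min (f · x)
    obtain ⟨n, rfl⟩ := hg e₀
    exact ⟨n, he₀⟩
  refine ⟨fun x => g (Nat.find (hmin x)), ?_, fun x => Nat.find_spec (hmin x)⟩
  refine Measurable.find (f := fun n _ => g n) (fun _ => measurable_const) (fun n => ?_) hmin
  simpa only [Set.ofPred_forall] using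
    MeasurableSet.iInter fun e => measurableSet_le (hf _) (hf e)

lemma card_filter_apply_eq {ι β : Type*} [Fintype ι] [DecidableEq ι] [Fintype β]
    [DecidableEq β] (i : ι) (b : β) :
    #{e : ι → β | e i = b} = Fintype.card β ^ (Fintype.card ι - 1) := by
  simpa using Fintype.card_filter_piFinset_const_eq_of_mem (univ : Finset β) i (mem_univ b)

section Mixture

variable {X : Type*} [MeasurableSpace X] {d : ℕ} (P : (Fin d → Bool) → Measure X)

lemma sum_filter_apply_eq_pow_mul_assouadMix (i : Fin d) (b : Bool) (s : Set X) :
    ∑ e with e i = b, P e s = 2 ^ (d - 1) * assouadMix P i b s := by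
  rw [assouadMix, Measure.smul_apply, Measure.finsetSum_apply, smul_eq_mul, ← mul_assoc,
    ENNReal.mul_inv_cancel (by positivity) (by simp), one_mul]

lemma isProbabilityMeasure_assouadMix [∀ e, IsProbabilityMeasure (P e)] (i : Fin d) (b : Bool) :
    IsProbabilityMeasure (assouadMix P i b) := by
  constructor
  have hsum := sum_filter_apply_eq_pow_mul_assouadMix P i b Set.univ
  simp only [measure_univ, sum_const, card_filter_apply_eq, Fintype.card_bool, Fintype.card_fin,
    nsmul_eq_mul, mul_one, Nat.cast_pow, Nat.cast_ofNat] at hsum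
  exact (ENNReal.mul_eq_left (by positivity) (by simp)).1 hsum.symm

lemma sum_apply_eq_pow_mul_assouadMix (i : Fin d) (s : Bool → Set X) :
    ∑ e, P e (s (e i)) =
      2 ^ (d - 1) * (assouadMix P i true (s true) + assouadMix P i false (s false)) := by
  rw [← sum_fiberwise univ (· i), Fintype.sum_bool, mul_add]
  simp only [← sum_filter_apply_eq_pow_mul_assouadMix]
  congr 1 <;> exact sum_congr rfl fun e he => by rw [(mem_filter.1 he).2]

end Mixture

section NearestVertex

variable {X Θ ι β : Type*} [Fintype ι] [DecidableEq β] {ρ : Θ × Θ → ℝ}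
  {θ : (ι → β) → Θ} {τ α : ℝ}

lemma div_mul_hammingDist_le_of_nearest (hsymm : ∀ a b, ρ (a, b) = ρ (b, a)) (hα : 0 < α)
    (hsep : ∀ u v, 2 * τ * (hammingDist u v : ℝ) ≤ ρ (θ u, θ v))
    (htri : ∀ u v t, ρ (θ u, θ v) ≤ α * (ρ (θ u, t) + ρ (θ v, t)))
    {t : Θ} {s e : ι → β} (hs : ρ (t, θ s) ≤ ρ (t, θ e)) :
    τ / α * hammingDist s e ≤ ρ (t, θ e) := by
  have h := (hsep s e).trans (htri s e t)
  rw [hsymm (θ e), hsymm (θ s)] at h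
  rw [div_mul_eq_mul_div, div_le_iff₀ hα]
  nlinarith

lemma lintegral_hammingDist [MeasurableSpace X] [MeasurableSpace β] [MeasurableSingletonClass β]
    (μ : Measure X) {sel : X → ι → β} (hsel : Measurable sel) (e : ι → β) :
    ∫⁻ x, (hammingDist (sel x) e : ℝ≥0∞) ∂μ = ∑ i, μ {x | sel x i ≠ e i} := by
  have hmeas (i : ι) : MeasurableSet {x | sel x i ≠ e i} :=
    ((measurable_pi_apply i).comp hsel) (measurableSet_singleton (e i)).compl
  have hind (x : X) :
      (hammingDist (sel x) e : ℝ≥0∞) = ∑ i, {x | sel x i ≠ e i}.indicator 1 x := by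
    simp [hammingDist, card_filter, Set.indicator_apply]
  simp_rw [hind]
  rw [lintegral_finsetSum _ fun i _ => measurable_one.indicator (hmeas i)]
  exact sum_congr rfl fun i _ => lintegral_indicator_one (hmeas i)

end NearestVertex

lemma pow_mul_ofReal_one_sub_tvDist_le {X : Type*} [MeasurableSpace X] {d : ℕ}
    (P : (Fin d → Bool) → Measure X) [∀ e, IsProbabilityMeasure (P e)]
    {sel : X → Fin d → Bool} (hsel : Measurable sel) (i : Fin d) :
    2 ^ d * ENNReal.ofReal (1 - tvDist (assouadMix P i true) (assouadMix P i false)) ≤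
      2 * ∑ e, P e {x | sel x i ≠ e i} := by
  have := isProbabilityMeasure_assouadMix P i
  have hA : MeasurableSet {x | sel x i = true} :=
    ((measurable_pi_apply i).comp hsel) (measurableSet_singleton true)
  have hcompl : {x | sel x i ≠ true} = {x | sel x i = true}ᶜ := rfl
  have hfalse : {x | sel x i ≠ false} = {x | sel x i = true} := by ext; simp
  -- `i : Fin d` forces `1 ≤ d`, so the truncated `2 * 2 ^ (d - 1)` is `2 ^ d`
  rw [sum_apply_eq_pow_mul_assouadMix P i fun b => {x | sel x i ≠ b}, hcompl, hfalse,
    ← mul_assoc, ← pow_succ', Nat.sub_add_cancel i.pos]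
  gcongr
  exact ofReal_one_sub_tvDist_le hA

theorem assouad_lemma_general {X Θ' : Type*} [MeasurableSpace X] [MeasurableSpace Θ']
    (ρ : Θ' × Θ' → ℝ) (hρsymm : ∀ a b, ρ (a, b) = ρ (b, a))
    (hρmeas : Measurable ρ)
    (d : ℕ)
    (P : (Fin d → Bool) → Measure X) (hP : ∀ e, IsProbabilityMeasure (P e))
    (θv : (Fin d → Bool) → Θ') (τ α : ℝ) (hα : 0 < α)
    (hsep : ∀ u v : Fin d → Bool,
      2 * τ * ((Finset.univ.filter fun i => u i ≠ v i).card : ℝ) ≤ ρ (θv u, θv v))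
    (htri : ∀ (u v : Fin d → Bool) (t : Θ'),
      ρ (θv u, θv v) ≤ α * (ρ (θv u, t) + ρ (θv v, t)))
    (est : X → Θ') (hest : Measurable est) :
    ∃ e : Fin d → Bool,
      ENNReal.ofReal
          ((τ / (2 * α)) * ∑ i : Fin d, (1 - tvDist (assouadMix P i true) (assouadMix P i false))) ≤
        ∫⁻ x, ENNReal.ofReal (ρ (est x, θv e)) ∂(P e) := by
  obtain ⟨sel, hsel, hnear⟩ := exists_measurable_argmin (fun e x => ρ (est x, θv e))
    fun e => hρmeas.comp (hest.prodMk measurable_const)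
  have hrisk (e : Fin d → Bool) : ENNReal.ofReal (τ / α) * ∑ i, P e {x | sel x i ≠ e i} ≤
      ∫⁻ x, ENNReal.ofReal (ρ (est x, θv e)) ∂(P e) := by
    rw [← lintegral_hammingDist _ hsel, ← lintegral_const_mul' _ _ ofReal_ne_top]
    refine lintegral_mono fun x => ?_
    rw [← ofReal_natCast, ← ofReal_mul' (Nat.cast_nonneg _)]
    exact ofReal_le_ofReal (div_mul_hammingDist_le_of_nearest hρsymm hα hsep htri (hnear x e))
  have hgap (i : Fin d) : 0 ≤ 1 - tvDist (assouadMix P i true) (assouadMix P i false) :=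
    have := isProbabilityMeasure_assouadMix P i
    sub_nonneg.2 tvDist_le_one
  refine (ENNReal.exists_le_of_sum_le univ_nonempty ?_).imp fun e he => he.2
  calc _ = ENNReal.ofReal (τ / (2 * α)) *
        ∑ i, 2 ^ d * ENNReal.ofReal (1 - tvDist (assouadMix P i true) (assouadMix P i false)) := by
        rw [sum_const, card_univ, Fintype.card_fun, Fintype.card_bool, Fintype.card_fin,
          ofReal_mul' (sum_nonneg fun i _ => hgap i), ofReal_sum_of_nonneg fun i _ => hgap i,
          ← mul_sum, nsmul_eq_mul]
        push_cast; ring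
    _ ≤ ENNReal.ofReal (τ / (2 * α)) * ∑ i, 2 * ∑ e, P e {x | sel x i ≠ e i} :=
        mul_le_mul_right (sum_le_sum fun i _ => pow_mul_ofReal_one_sub_tvDist_le P hsel i) _
    _ = ∑ e, ENNReal.ofReal (τ / α) * ∑ i, P e {x | sel x i ≠ e i} := by
        rw [← mul_sum, ← mul_assoc, ← ofReal_ofNat 2, ← ofReal_mul' zero_le_two,
          show τ / (2 * α) * 2 = τ / α by ring, sum_comm, mul_sum]
    _ ≤ _ := sum_le_sum fun e _ => hrisk e

/-- Assouad's lemma. The maximum risk over the hypercube is attained by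
some vertex `e` and is lower bounded by `(τ/(2α))·Σᵢ(1 − TV(P_{+i}, P_{−i}))`. -/
theorem assouad_lemma {X Θ' : Type*} [MeasurableSpace X] [MeasurableSpace Θ']
    (ρ : Θ' × Θ' → ℝ) (hρ0 : ∀ p, 0 ≤ ρ p) (hρsymm : ∀ a b, ρ (a, b) = ρ (b, a))
    (hρmeas : Measurable ρ)
    (d : ℕ) (hd : 1 ≤ d)
    (P : (Fin d → Bool) → Measure X) (hP : ∀ e, IsProbabilityMeasure (P e))
    (θv : (Fin d → Bool) → Θ') (τ α : ℝ) (hα : 0 < α)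
    (hsep : ∀ u v : Fin d → Bool,
      2 * τ * ((Finset.univ.filter fun i => u i ≠ v i).card : ℝ) ≤ ρ (θv u, θv v))
    (htri : ∀ (u v : Fin d → Bool) (t : Θ'),
      ρ (θv u, θv v) ≤ α * (ρ (θv u, t) + ρ (θv v, t)))
    (est : X → Θ') (hest : Measurable est) :
    ∃ e : Fin d → Bool,
      ENNReal.ofReal
          ((τ / (2 * α)) * ∑ i : Fin d, (1 - tvDist (assouadMix P i true) (assouadMix P i false))) ≤
        ∫⁻ x, ENNReal.ofReal (ρ (est x, θv e)) ∂(P e) :=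
  assouad_lemma_general ρ hρsymm hρmeas d P hP θv τ α hα hsep htri est hest
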